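/- (Dual transport equation: escape of the support.) Let μ > 0, R > 1, T > 0, and let r be an admissible fusion kernel with exponent μ; set r̄_ε(a,v) := r(a,v)/(1 + ε^{2μ+2} a^μ). Let δ₁ > 0 and let χ ∈ C¹_b(S) vanish whenever v ∉ [1/R, R] and whenever a ≤ c₀ v^{2/3} + δ₁. Let φ_ε be the solution of ∂_t φ_ε + (1/ε) r̄_ε(a,v)(c₀ v^{2/3} − a) ∂_a φ_ε = 0 with φ_ε(T,·) = χ. Then for every M > 1 and every σ̄ > 0 there exists ε_{M,σ̄,δ₁} ∈ (0,1) such that for every ε ≤ ε_{M,σ̄,δ₁}, the support of φ_ε(t,·) is contained in {(a,v) ∈ (0,∞)² : a ≥ M} for every t ∈ [0, T − σ̄]. -/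

import Mathlib

open MeasureTheory Real Set Filter Topology
open scoped ENNReal

noncomputable section

/-- `c₀ = (36π)^(1/3)`, the isoperimetric constant relating area and volume of a ball. -/
def c0 : ℝ := (36 * Real.pi) ^ ((1 : ℝ) / 3)

/-- The open quadrant `(0,∞)²` of pairs `(a,v)` (surface area, volume). -/
def Quad : Set (ℝ × ℝ) := {p | 0 < p.1 ∧ 0 < p.2}

/-- The isoperimetric region `{(a,v) : v > 0, a ≥ c₀ v^(2/3)}`. -/
def IsoRegion : Set (ℝ × ℝ) := {p | 0 < p.2 ∧ c0 * p.2 ^ ((2 : ℝ) / 3) ≤ p.1}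

/-- A nonnegative (Radon) measure on `(0,∞)²` supported in `{a ≥ c₀ v^(2/3)}`:
it gives zero mass to the complement of the isoperimetric region. -/
def IsIsoMeasure (m : Measure (ℝ × ℝ)) : Prop := m IsoRegionᶜ = 0

/-- `C₀((0,∞)²)`: continuous functions vanishing at infinity of the open quadrant
(extended by zero outside the quadrant). -/
def IsC0Quad (φ : ℝ × ℝ → ℝ) : Prop :=
  Continuous φ ∧ (∀ p, p ∉ Quad → φ p = 0) ∧
    ∀ δ > 0, ∃ Kc : Set (ℝ × ℝ), IsCompact Kc ∧ Kc ⊆ Quad ∧ ∀ p ∉ Kc, |φ p| ≤ δ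

/-- `C_c((0,∞)²)`: continuous functions with compact support contained in the quadrant. -/
def IsCcQuad (φ : ℝ × ℝ → ℝ) : Prop :=
  Continuous φ ∧ HasCompactSupport φ ∧ tsupport φ ⊆ Quad

/-- `C₀((0,∞))`: continuous functions on `(0,∞)` vanishing at infinity (extended by zero). -/
def IsC0Pos (φ : ℝ → ℝ) : Prop :=
  Continuous φ ∧ (∀ v, v ∉ Ioi (0 : ℝ) → φ v = 0) ∧
    ∀ δ > 0, ∃ Kc : Set ℝ, IsCompact Kc ∧ Kc ⊆ Ioi (0 : ℝ) ∧ ∀ v ∉ Kc, |φ v| ≤ δ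

/-- `C_c((0,∞))`: continuous functions with compact support contained in `(0,∞)`. -/
def IsCcPos (φ : ℝ → ℝ) : Prop :=
  Continuous φ ∧ HasCompactSupport φ ∧ tsupport φ ⊆ Ioi (0 : ℝ)

/-- Partial derivative in the area variable `a`. -/
def da (φ : ℝ × ℝ → ℝ) (p : ℝ × ℝ) : ℝ := deriv (fun a => φ (a, p.2)) p.1

/-- Time-dependent test functions `φ ∈ C¹_c([0,∞); C¹_c((0,∞)²))`. -/
def IsTestFun (ψ : ℝ × (ℝ × ℝ) → ℝ) : Prop :=
  ContDiff ℝ 1 ψ ∧ HasCompactSupport ψ ∧ ∀ q : ℝ × (ℝ × ℝ), q.2 ∉ Quad → ψ q = 0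

/-- The assumptions on the coagulation kernel `K`: continuity, symmetry, and the
two-sided power law bounds with constants `K₀ ≥ K₁ > 0` and exponents
`al > 0`, `be ∈ (0,1)`, `be - al ∈ (0,1)`. -/
structure IsCoagKernel (K : ℝ × ℝ → ℝ × ℝ → ℝ) (K₀ K₁ al be : ℝ) : Prop where
  cont : ContinuousOn (fun q : (ℝ × ℝ) × (ℝ × ℝ) => K q.1 q.2) (Quad ×ˢ Quad)
  symm : ∀ η η', K η η' = K η' η
  K1_pos : 0 < K₁
  K1_le_K0 : K₁ ≤ K₀
  al_pos : 0 < al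
  be_mem : be ∈ Ioo (0 : ℝ) 1
  be_sub_al_mem : be - al ∈ Ioo (0 : ℝ) 1
  lower : ∀ η ∈ Quad, ∀ η' ∈ Quad,
    K₁ * (η.2 ^ (-al) * η'.2 ^ be + η'.2 ^ (-al) * η.2 ^ be) ≤ K η η'
  upper : ∀ η ∈ Quad, ∀ η' ∈ Quad,
    K η η' ≤ K₀ * (η.2 ^ (-al) * η'.2 ^ be + η'.2 ^ (-al) * η.2 ^ be)

/-- The assumptions on an admissible fusion kernel `r`: positivity, `C¹` regularity,
two-sided power law bounds `R₀ a^mu v^sg ≤ r ≤ R₁ a^mu v^sg`, and the structural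
differential inequalities on the isoperimetric region. -/
structure IsFusionKernel (r : ℝ × ℝ → ℝ) (R₀ R₁ mu sg B : ℝ) : Prop where
  smooth : ContDiffOn ℝ 1 r Quad
  pos : ∀ η ∈ Quad, 0 < r η
  R0_pos : 0 < R₀
  R1_pos : 0 < R₁
  B_pos : 0 < B
  lower : ∀ η ∈ Quad, R₀ * η.1 ^ mu * η.2 ^ sg ≤ r η
  upper : ∀ η ∈ Quad, r η ≤ R₁ * η.1 ^ mu * η.2 ^ sg
  cond_pos : 0 < mu → ∀ η ∈ IsoRegion, 0 ≤ da r η - mu * η.1⁻¹ * r η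
  cond_nonpos : mu ≤ 0 → ∀ η ∈ IsoRegion,
    0 ≤ da r η * (η.1 - c0 * η.2 ^ ((2 : ℝ) / 3)) + r η
  cond_upper : ∀ η ∈ IsoRegion, da r η ≤ B * η.1⁻¹ * r η

/-- The weak identity at time `t` against the test function `ψ`, for the
fusion–coagulation equation with fusion coefficient `c` (the `Λ`-fusion problem
corresponds to `c = Λ⁻¹`). -/
def WeakIdentity (K : ℝ × ℝ → ℝ × ℝ → ℝ) (r : ℝ × ℝ → ℝ) (c : ℝ)
    (fin : Measure (ℝ × ℝ)) (f : ℝ → Measure (ℝ × ℝ))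
    (ψ : ℝ × (ℝ × ℝ) → ℝ) (t : ℝ) : Prop :=
  (∫ η, ψ (t, η) ∂(f t)) - (∫ η, ψ (0, η) ∂fin)
      - ∫ s in (0 : ℝ)..t, ∫ η, deriv (fun u => ψ (u, η)) s ∂(f s)
    = (∫ s in (0 : ℝ)..t, (1 / 2) *
        ∫ η, ∫ η', K η η' * (ψ (s, η + η') - ψ (s, η) - ψ (s, η')) ∂(f s) ∂(f s))
      + c * ∫ s in (0 : ℝ)..t,
          ∫ η, r η * (c0 * η.2 ^ ((2 : ℝ) / 3) - η.1) * da (fun p => ψ (s, p)) η ∂(f s)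

/-- A weak solution of the fusion–coagulation problem with fusion coefficient `c`
(power-law exponents `al`, `be` of the coagulation kernel enter the a priori moment
bound), initial datum `fin`: a weak-* continuous family of measures supported in the
isoperimetric region, with locally uniformly bounded `(v^(-al) + v^be)`-moments,
satisfying the weak identity for all test functions and times. -/
def IsWeakSolution (K : ℝ × ℝ → ℝ × ℝ → ℝ) (r : ℝ × ℝ → ℝ) (c al be : ℝ)
    (fin : Measure (ℝ × ℝ)) (f : ℝ → Measure (ℝ × ℝ)) : Prop :=
  (∀ t, 0 ≤ t → IsIsoMeasure (f t)) ∧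
  (∀ φ, IsC0Quad φ → ContinuousOn (fun t => ∫ η, φ η ∂(f t)) (Ici (0 : ℝ))) ∧
  (∀ T > (0 : ℝ), ∃ C : ℝ≥0∞, C ≠ ⊤ ∧ ∀ t ∈ Icc (0 : ℝ) T,
      (∫⁻ η, ENNReal.ofReal (η.2 ^ (-al) + η.2 ^ be) ∂(f t)) ≤ C) ∧
  (∀ ψ, IsTestFun ψ → ∀ t, 0 ≤ t → WeakIdentity K r c fin f ψ t)

/-- The regularized fusion kernel `r̄_ε(a,v) = r(a,v)/(1 + ε^(2μ+2) a^μ)`. -/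
def rbarFn (r : ℝ × ℝ → ℝ) (mu ε : ℝ) (η : ℝ × ℝ) : ℝ :=
  r η / (1 + ε ^ (2 * mu + 2) * η.1 ^ mu)

end

/-!
Along a characteristic `ȧ = ε⁻¹ r̄_ε(a,v) (c₀v^{2/3} − a)` the solution `φ_ε` is constant. On the
strip `v ∈ [1/R, R]`, `a ≤ M` the speed `r̄_ε` is bounded below by some `c > 0` uniformly in
`ε ≤ 1` (by compactness), so the distance `a − c₀v^{2/3}` to the isoperimetric line decays at
least like `e^{−c t/ε}`. A characteristic starting below `M` at a time `t ≤ T − σ̄` is thus within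
`M e^{−cσ̄/ε} ≤ δ₁` of the line at time `T`, where `χ` vanishes.
-/

open scoped NNReal

theorem exists_hasDerivWithinAt_of_lipschitzWith {E : Type*} [NormedAddCommGroup E]
    [NormedSpace ℝ E] [CompleteSpace E] {G : E → E} {K : ℝ≥0} {C : ℝ}
    (hG : LipschitzWith K G) (hC : ∀ x, ‖G x‖ ≤ C) (x₀ : E) {t₀ T : ℝ} (hT : t₀ ≤ T) :
    ∃ A : ℝ → E, A t₀ = x₀ ∧ ∀ t ∈ Icc t₀ T, HasDerivWithinAt A (G (A t)) (Icc t₀ T) t := by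
  have hpl : IsPicardLindelof (fun _ => G) (tmin := t₀) (tmax := T) ⟨t₀, le_rfl, hT⟩ x₀
      (C.toNNReal * (T - t₀).toNNReal) 0 C.toNNReal K :=
    .of_time_independent (fun x _ => (hC x).trans (Real.le_coe_toNNReal C))
      hG.lipschitzOnWith (by simp [max_eq_left (sub_nonneg.2 hT)])
  exact hpl.exists_eq_forall_mem_Icc_hasDerivWithinAt₀

theorem le_mul_exp_of_hasDerivWithinAt_le {f f' : ℝ → ℝ} {a b k : ℝ}
    (hf : ∀ x ∈ Icc a b, HasDerivWithinAt f (f' x) (Icc a b) x)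
    (hle : ∀ x ∈ Ico a b, f' x ≤ k * f x) :
    ∀ x ∈ Icc a b, f x ≤ f a * exp (k * (x - a)) := by
  intro x hx
  have := le_gronwallBound_of_liminf_deriv_right_le (δ := f a) (ε := 0)
    (fun y hy => (hf y hy).continuousWithinAt)
    (fun y hy _ hr => ((hf y (Ico_subset_Icc_self hy)).mono_of_mem_nhdsWithin
      (Icc_mem_nhdsGE_of_mem hy)).liminf_right_slope_le hr)
    le_rfl (by simpa using hle) x hx
  rwa [gronwallBound_ε0] at this

theorem eq_of_hasDerivAt_zero {f : ℝ → ℝ} {a b : ℝ} (hab : a < b)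
    (hf : ContinuousOn f (Icc a b)) (hf' : ∀ x ∈ Ioo a b, HasDerivAt f 0 x) : f a = f b := by
  obtain ⟨_, -, hc⟩ := exists_hasDerivAt_eq_slope f (fun _ => 0) hab hf hf'
  rw [eq_comm, div_eq_zero_iff, sub_eq_zero] at hc
  exact (hc.resolve_right (sub_ne_zero.2 hab.ne')).symm

theorem exists_hasDerivWithinAt_mem_Ioc {b : ℝ → ℝ} {K : ℝ≥0} {L a₀ t₀ T : ℝ}
    (hLa : L < a₀) (hT : t₀ ≤ T) (hb : LipschitzOnWith K b (Icc L a₀)) (hbL : b L = 0)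
    (hb_nonpos : ∀ x ∈ Icc L a₀, b x ≤ 0) :
    ∃ A : ℝ → ℝ, A t₀ = a₀ ∧
      ∀ t ∈ Icc t₀ T, A t ∈ Ioc L a₀ ∧ HasDerivWithinAt A (b (A t)) (Icc t₀ T) t := by
  set G : ℝ → ℝ := fun x => b (projIcc L a₀ hLa.le x)
  have hG_eq : ∀ x ∈ Icc L a₀, G x = b x := fun x hx => by simp [G, projIcc_of_mem _ hx]
  have hG : LipschitzWith (K * 1) G := hb.to_restrict.comp (LipschitzWith.projIcc hLa.le)
  have hG_nonpos : ∀ x, G x ≤ 0 := fun x => hb_nonpos _ (projIcc L a₀ hLa.le x).2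
  have hG_bdd : ∀ x, ‖G x‖ ≤ K * (a₀ - L) := fun x => by
    have hy := (projIcc L a₀ hLa.le x).2
    calc ‖G x‖ = ‖G x - b L‖ := by rw [hbL, sub_zero]
      _ ≤ K * ‖(projIcc L a₀ hLa.le x : ℝ) - L‖ := hb.norm_sub_le hy (left_mem_Icc.2 hLa.le)
      _ ≤ K * (a₀ - L) := by
        rw [Real.norm_of_nonneg (sub_nonneg.2 hy.1)]; gcongr; exact hy.2
  obtain ⟨A, hA0, hA⟩ := exists_hasDerivWithinAt_of_lipschitzWith hG hG_bdd a₀ hT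
  have hAc : ContinuousOn A (Icc t₀ T) := fun t ht => (hA t ht).continuousWithinAt
  -- the constant curve `L` solves the same equation, so by backward uniqueness `A` never hits it
  have hA_ne : ∀ s ∈ Icc t₀ T, A s ≠ L := by
    intro s hs hAs
    have hsub : Ioc t₀ s ⊆ Ioc t₀ T := Ioc_subset_Ioc_right hs.2
    have := ODE_solution_unique_of_mem_Icc_left (v := fun _ => G) (s := fun _ => univ)
      (fun _ _ => hG.lipschitzOnWith) (hAc.mono (Icc_subset_Icc_right hs.2))
      (fun t ht => (hA t (Ioc_subset_Icc_self (hsub ht))).mono_of_mem_nhdsWithin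
        (Icc_mem_nhdsLE_of_mem (hsub ht)))
      (fun _ _ => mem_univ _) continuousOn_const
      (fun t _ => by
        simpa [hG_eq L (left_mem_Icc.2 hLa.le), hbL] using hasDerivWithinAt_const t (Iic t) L)
      (fun _ _ => mem_univ _) hAs ⟨le_rfl, hs.1⟩
    exact hLa.ne' (hA0 ▸ this)
  have hA_le : ∀ s ∈ Icc t₀ T, A s ≤ a₀ := fun s hs => by
    simpa [hA0] using le_mul_exp_of_hasDerivWithinAt_le (k := 0) hA
      (fun t _ => by simpa using hG_nonpos (A t)) s hs
  have hA_gt : ∀ s ∈ Icc t₀ T, L < A s := by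
    intro s hs
    by_contra! h
    obtain ⟨s', hs', hAs'⟩ := intermediate_value_Icc' hs.1 (hAc.mono (Icc_subset_Icc_right hs.2))
      ⟨h, hA0 ▸ hLa.le⟩
    exact hA_ne s' ⟨hs'.1, hs'.2.trans hs.2⟩ hAs'
  refine ⟨A, hA0, fun t ht => ⟨⟨hA_gt t ht, hA_le t ht⟩, ?_⟩⟩
  have hAt : A t ∈ Icc L a₀ := ⟨(hA_gt t ht).le, hA_le t ht⟩
  simpa [hG_eq _ hAt] using hA t ht

theorem hasDerivAt_comp_prodMk {u : ℝ × ℝ → ℝ} {A : ℝ → ℝ} {A' s : ℝ}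
    (hu : DifferentiableAt ℝ u (s, A s)) (hA : HasDerivAt A A' s) :
    HasDerivAt (fun τ => u (τ, A τ))
      (deriv (fun τ => u (τ, A s)) s + A' * deriv (fun x => u (s, x)) (A s)) s := by
  have hD := hu.hasFDerivAt
  set D := fderiv ℝ u (s, A s)
  have ht : HasDerivAt (fun τ => u (τ, A s)) (D (1, 0)) s :=
    hD.comp_hasDerivAt s ((hasDerivAt_id s).prodMk (hasDerivAt_const s _))
  have hx : HasDerivAt (fun x => u (s, x)) (D (0, 1)) (A s) :=
    hD.comp_hasDerivAt _ ((hasDerivAt_const _ s).prodMk (hasDerivAt_id _))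
  have hsplit : ((1 : ℝ), A') = (1, 0) + A' • (0, 1) := by simp
  rw [ht.deriv, hx.deriv, ← smul_eq_mul, ← D.map_smul, ← D.map_add, ← hsplit]
  exact hD.comp_hasDerivAt s ((hasDerivAt_id s).prodMk hA)

theorem apply_eq_apply_of_characteristic {u : ℝ × ℝ → ℝ} {b A : ℝ → ℝ} {t₀ T : ℝ}
    {U : Set (ℝ × ℝ)} (htT : t₀ < T) (hu : ContDiffOn ℝ 1 u U) (hAc : ContinuousOn A (Icc t₀ T))
    (hAU : ∀ t ∈ Icc t₀ T, (t, A t) ∈ U) (hA_int : ∀ s ∈ Ioo t₀ T, (s, A s) ∈ interior U)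
    (hA : ∀ s ∈ Ioo t₀ T, HasDerivAt A (b (A s)) s)
    (hpde : ∀ s ∈ Ioo t₀ T,
      deriv (fun τ => u (τ, A s)) s + b (A s) * deriv (fun y => u (s, y)) (A s) = 0) :
    u (t₀, A t₀) = u (T, A T) := by
  refine eq_of_hasDerivAt_zero (f := fun τ => u (τ, A τ)) htT
    (hu.continuousOn.comp (continuousOn_id.prodMk hAc) hAU) fun s hs => ?_
  have hd := hasDerivAt_comp_prodMk
    ((hu.contDiffAt (mem_interior_iff_mem_nhds.1 (hA_int s hs))).differentiableAt one_ne_zero)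
    (hA s hs)
  rwa [hpde s hs] at hd

theorem transport_eq_zero_of_contracting {u : ℝ × ℝ → ℝ} {b : ℝ → ℝ} {K : ℝ≥0}
    {L a₀ t₀ T κ δ : ℝ} (htT : t₀ < T) (hLa : L ≤ a₀) (hκ : 0 ≤ κ)
    (hu : ContDiffOn ℝ 1 u (Icc t₀ T ×ˢ Ici L))
    (hpde : ∀ s ∈ Ioo t₀ T, ∀ x ∈ Icc L a₀,
      deriv (fun τ => u (τ, x)) s + b x * deriv (fun y => u (s, y)) x = 0)
    (hb : LipschitzOnWith K b (Icc L a₀)) (hbL : b L = 0)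
    (hb_le : ∀ x ∈ Icc L a₀, b x ≤ -κ * (x - L))
    (hterm : ∀ x ∈ Icc L (L + δ), u (T, x) = 0)
    (hsmall : (a₀ - L) * exp (-κ * (T - t₀)) ≤ δ) : u (t₀, a₀) = 0 := by
  rcases hLa.eq_or_lt with rfl | hLa
  · have hslice : ContDiffOn ℝ 1 (fun τ => u (τ, L)) (Icc t₀ T) :=
      hu.comp (contDiff_id.prodMk contDiff_const).contDiffOn fun τ hτ => ⟨hτ, self_mem_Ici⟩
    have hconst := eq_of_hasDerivAt_zero htT hslice.continuousOn fun s hs => by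
      have hd := ((hslice.contDiffAt (Icc_mem_nhds hs.1 hs.2)).differentiableAt
        one_ne_zero).hasDerivAt
      have h0 := hpde s hs L (left_mem_Icc.2 le_rfl)
      rw [hbL, zero_mul, add_zero] at h0
      exact h0 ▸ hd
    rw [hconst]
    exact hterm L ⟨le_rfl, by simpa using hsmall⟩
  have hb_nonpos : ∀ x ∈ Icc L a₀, b x ≤ 0 := fun x hx =>
    (hb_le x hx).trans (mul_nonpos_of_nonpos_of_nonneg (neg_nonpos.2 hκ) (sub_nonneg.2 hx.1))
  obtain ⟨A, hA0, hA⟩ := exists_hasDerivWithinAt_mem_Ioc (t₀ := t₀) (T := T) hLa htT.le hb hbL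
    hb_nonpos
  have hAc : ContinuousOn A (Icc t₀ T) := fun t ht => (hA t ht).2.continuousWithinAt
  have hAIcc : ∀ t ∈ Icc t₀ T, A t ∈ Icc L a₀ := fun t ht => Ioc_subset_Icc_self (hA t ht).1
  have hconst : u (t₀, A t₀) = u (T, A T) := by
    refine apply_eq_apply_of_characteristic htT hu hAc (fun t ht => ⟨ht, (hAIcc t ht).1⟩)
      (fun s hs => ?_)
      (fun s hs => (hA s (Ioo_subset_Icc_self hs)).2.hasDerivAt (Icc_mem_nhds hs.1 hs.2))
      fun s hs => hpde s hs _ (hAIcc s (Ioo_subset_Icc_self hs))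
    rw [interior_prod_eq, interior_Icc, interior_Ici]
    exact ⟨hs, (hA s (Ioo_subset_Icc_self hs)).1.1⟩
  have hdecay := le_mul_exp_of_hasDerivWithinAt_le (f := fun t => A t - L)
    (fun t ht => (hA t ht).2.sub_const L) (fun t ht => hb_le _ (hAIcc t (Ico_subset_Icc_self ht)))
    T ⟨htT.le, le_rfl⟩
  rw [← hA0, hconst]
  refine hterm _ ⟨(hAIcc T ⟨htT.le, le_rfl⟩).1, ?_⟩
  simp only [hA0] at hdecay
  linarith

theorem c0_pos : 0 < c0 := rpow_pos_of_pos (by positivity) _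

theorem contDiffOn_rbarFn_fst {r : ℝ × ℝ → ℝ} {mu ε v : ℝ} (hr : ContDiffOn ℝ 1 r Quad)
    (hε : 0 ≤ ε) (hv : 0 < v) : ContDiffOn ℝ 1 (fun x => rbarFn r mu ε (x, v)) (Ioi 0) := by
  have hr' : ContDiffOn ℝ 1 (fun x => r (x, v)) (Ioi 0) :=
    hr.comp (contDiff_id.prodMk contDiff_const).contDiffOn fun _ hx => ⟨hx, hv⟩
  have hpow : ContDiffOn ℝ 1 (fun x : ℝ => x ^ mu) (Ioi 0) := fun x hx =>
    (contDiffAt_rpow_const_of_ne (ne_of_gt hx)).contDiffWithinAt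
  exact hr'.div (contDiffOn_const.add (contDiffOn_const.mul hpow)) fun x hx => by
    have : 0 ≤ ε ^ (2 * mu + 2) * x ^ mu := mul_nonneg (rpow_nonneg hε _) (rpow_nonneg hx.le _)
    linarith

theorem exists_pos_le_rbarFn {r : ℝ × ℝ → ℝ} {mu R M : ℝ} (hr_cont : ContinuousOn r Quad)
    (hr_pos : ∀ η ∈ Quad, 0 < r η) (hmu : 0 ≤ mu) (hR : 0 < R) (hM : 0 < M) :
    ∃ c > 0, ∀ ε ∈ Ioc (0 : ℝ) 1, ∀ η ∈ IsoRegion, η.2 ∈ Icc (1 / R) R → η.1 ≤ M →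
      c ≤ rbarFn r mu ε η := by
  set amin := c0 * (1 / R) ^ ((2 : ℝ) / 3)
  have hamin : 0 < amin := mul_pos c0_pos (by positivity)
  set K := Icc amin M ×ˢ Icc (1 / R) R
  have hKQ : K ⊆ Quad := fun η hη =>
    ⟨hamin.trans_le hη.1.1, (one_div_pos.2 hR).trans_le hη.2.1⟩
  obtain ⟨c, hc, hcr⟩ := (isCompact_Icc.prod isCompact_Icc).exists_forall_le'
    (hr_cont.mono hKQ) fun η hη => hr_pos η (hKQ hη)
  have hMmu : 0 < 1 + M ^ mu := by linarith [rpow_pos_of_pos hM mu]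
  refine ⟨c / (1 + M ^ mu), div_pos hc hMmu, ?_⟩
  rintro ε hε ⟨a, v⟩ ⟨hv, ha⟩ hvR haM
  dsimp only at hv ha hvR haM ⊢
  have hηK : (a, v) ∈ K := ⟨⟨le_trans (mul_le_mul_of_nonneg_left
    (rpow_le_rpow (by positivity) hvR.1 (by norm_num)) c0_pos.le) ha, haM⟩, hvR⟩
  have ha0 : 0 < a := (hKQ hηK).1
  have hden_pos : 0 < 1 + ε ^ (2 * mu + 2) * a ^ mu := by
    linarith [mul_nonneg (rpow_nonneg hε.1.le (2 * mu + 2)) (rpow_nonneg ha0.le mu)]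
  have hden : 1 + ε ^ (2 * mu + 2) * a ^ mu ≤ 1 + M ^ mu := by
    have h1 : ε ^ (2 * mu + 2) ≤ 1 := rpow_le_one hε.1.le hε.2 (by linarith)
    have h2 : a ^ mu ≤ M ^ mu := rpow_le_rpow ha0.le haM hmu
    nlinarith [rpow_nonneg ha0.le mu, rpow_nonneg hε.1.le (2 * mu + 2)]
  calc c / (1 + M ^ mu) ≤ r (a, v) / (1 + M ^ mu) := by gcongr; exact hcr _ hηK
    _ ≤ rbarFn r mu ε (a, v) := div_le_div_of_nonneg_left (hr_pos _ (hKQ hηK)).le hden_pos hden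

theorem exists_mul_exp_neg_div_le {κ : ℝ} (hκ : 0 < κ) (C : ℝ) {δ : ℝ} (hδ : 0 < δ) :
    ∃ ε₀ ∈ Ioo (0 : ℝ) 1, ∀ ε ∈ Ioc 0 ε₀, C * exp (-(κ / ε)) ≤ δ := by
  have hlim : Tendsto (fun ε => C * exp (-(κ / ε))) (𝓝[>] 0) (𝓝 0) := by
    have : Tendsto (fun ε : ℝ => κ / ε) (𝓝[>] 0) atTop := by
      simpa only [div_eq_mul_inv] using tendsto_inv_nhdsGT_zero.const_mul_atTop hκ
    simpa using (tendsto_exp_atBot.comp (tendsto_neg_atTop_atBot.comp this)).const_mul C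
  obtain ⟨ε₁, hε₁ : 0 < ε₁, hsub⟩ := mem_nhdsGT_iff_exists_Ioo_subset.1
    ((tendsto_order.1 hlim).2 δ hδ)
  have hmin := min_le_left (1 / 2 : ℝ) (ε₁ / 2)
  have hmin' := min_le_right (1 / 2 : ℝ) (ε₁ / 2)
  refine ⟨min (1 / 2) (ε₁ / 2), ⟨lt_min (by norm_num) (by linarith), by linarith⟩,
    fun ε hε => (hsub ⟨hε.1, by linarith [hε.2]⟩).le⟩

theorem eq_zero_of_dual_transport {r : ℝ × ℝ → ℝ} {ψ : ℝ → ℝ × ℝ → ℝ} {mu ε c δ t T a v : ℝ}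
    (hr : ContDiffOn ℝ 1 r Quad) (hε : 0 < ε) (hc : 0 < c) (ht : 0 ≤ t) (htT : t < T)
    (hv : 0 < v) (ha : c0 * v ^ ((2 : ℝ) / 3) ≤ a)
    (hψ : ContDiffOn ℝ 1 (fun q : ℝ × (ℝ × ℝ) => ψ q.1 q.2) (Icc 0 T ×ˢ IsoRegion))
    (hpde : ∀ s ∈ Icc 0 T, ∀ η ∈ IsoRegion, deriv (fun τ => ψ τ η) s
      + ε⁻¹ * rbarFn r mu ε η * (c0 * η.2 ^ ((2 : ℝ) / 3) - η.1) * da (ψ s) η = 0)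
    (hterm : ∀ η ∈ IsoRegion, η.1 ≤ c0 * η.2 ^ ((2 : ℝ) / 3) + δ → ψ T η = 0)
    (hc_le : ∀ x ∈ Icc (c0 * v ^ ((2 : ℝ) / 3)) a, c ≤ rbarFn r mu ε (x, v))
    (hsmall : (a - c0 * v ^ ((2 : ℝ) / 3)) * exp (-(c / ε) * (T - t)) ≤ δ) :
    ψ t (a, v) = 0 := by
  set L := c0 * v ^ ((2 : ℝ) / 3)
  have hL : 0 < L := mul_pos c0_pos (rpow_pos_of_pos hv _)
  have hiso : ∀ x, L ≤ x → (x, v) ∈ IsoRegion := fun x hx => ⟨hv, hx⟩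
  have hb : ContDiffOn ℝ 1 (fun x => ε⁻¹ * rbarFn r mu ε (x, v) * (L - x)) (Icc L a) :=
    ((contDiffOn_const.mul (contDiffOn_rbarFn_fst hr hε.le hv)).mul
      (contDiffOn_const.sub contDiffOn_id)).mono fun x hx => hL.trans_le hx.1
  obtain ⟨K, hK⟩ := hb.exists_lipschitzOnWith one_ne_zero (convex_Icc _ _) isCompact_Icc
  refine transport_eq_zero_of_contracting (u := fun p => ψ p.1 (p.2, v))
    (b := fun x => ε⁻¹ * rbarFn r mu ε (x, v) * (L - x)) htT ha (div_pos hc hε).le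
    ((hψ.comp (contDiff_fst.prodMk (contDiff_snd.prodMk contDiff_const)).contDiffOn)
      fun p hp => ⟨⟨ht.trans hp.1.1, hp.1.2⟩, hiso _ hp.2⟩)
    (fun s hs x hx => hpde s ⟨ht.trans hs.1.le, hs.2.le⟩ (x, v) (hiso x hx.1))
    hK (by simp) (fun x hx => ?_) (fun x hx => hterm _ (hiso x hx.1) hx.2) hsmall
  have := mul_le_mul_of_nonpos_right
    (mul_le_mul_of_nonneg_left (hc_le x hx) (inv_nonneg.2 hε.le)) (sub_nonpos.2 hx.1)
  rw [div_eq_inv_mul]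
  linarith

theorem dual_transport_support_escape_general
    (mu sg R₀ R₁ B : ℝ) (hmu : 0 < mu)
    (R T : ℝ) (hR : 1 < R)
    (r : ℝ × ℝ → ℝ) (hr : IsFusionKernel r R₀ R₁ mu sg B)
    (δ₁ : ℝ) (hδ₁ : 0 < δ₁)
    (χ : ℝ × ℝ → ℝ)
    (hχ_iso : ∀ η : ℝ × ℝ, η.1 ≤ c0 * η.2 ^ ((2 : ℝ) / 3) + δ₁ → χ η = 0)
    -- φ ε is, for each ε ∈ (0,1), the solution of the dual transport equation
    (φ : ℝ → ℝ → ℝ × ℝ → ℝ)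
    (hφ_smooth : ∀ ε ∈ Ioo (0 : ℝ) 1,
      ContDiffOn ℝ 1 (fun q : ℝ × (ℝ × ℝ) => φ ε q.1 q.2)
        (Icc (0 : ℝ) T ×ˢ IsoRegion))
    (hφ_v : ∀ ε ∈ Ioo (0 : ℝ) 1, ∀ t ∈ Icc (0 : ℝ) T,
      ∀ η : ℝ × ℝ, η.2 ∉ Icc (1 / R) R → φ ε t η = 0)
    (hφ_term : ∀ ε ∈ Ioo (0 : ℝ) 1, ∀ η ∈ IsoRegion, φ ε T η = χ η)
    (hφ_pde : ∀ ε ∈ Ioo (0 : ℝ) 1, ∀ t ∈ Icc (0 : ℝ) T, ∀ η ∈ IsoRegion,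
      deriv (fun u => φ ε u η) t
        + ε⁻¹ * rbarFn r mu ε η * (c0 * η.2 ^ ((2 : ℝ) / 3) - η.1)
          * da (φ ε t) η = 0) :
    ∀ M > (1 : ℝ), ∀ sb > (0 : ℝ), ∃ ε₀ ∈ Ioo (0 : ℝ) 1,
      ∀ ε ∈ Ioo (0 : ℝ) 1, ε ≤ ε₀ →
        ∀ t ∈ Icc (0 : ℝ) (T - sb), ∀ η ∈ IsoRegion, η.1 < M → φ ε t η = 0 := by
  intro M hM sb hsb
  obtain ⟨c, hc, hc_le⟩ := exists_pos_le_rbarFn (mu := mu) hr.smooth.continuousOn hr.pos hmu.le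
    (one_pos.trans hR) (one_pos.trans hM)
  obtain ⟨ε₀, hε₀, hsmall⟩ := exists_mul_exp_neg_div_le (mul_pos hc hsb) M hδ₁
  refine ⟨ε₀, hε₀, fun ε hε hεε₀ t ht ⟨a, v⟩ ⟨hv0, hLa⟩ haM => ?_⟩
  dsimp only at hv0 hLa haM
  have htT : t < T := by linarith [ht.2]
  by_cases hv : v ∈ Icc (1 / R) R
  swap
  · exact hφ_v ε hε t ⟨ht.1, htT.le⟩ _ hv
  refine eq_zero_of_dual_transport hr.smooth hε.1 hc ht.1 htT hv0 hLa (hφ_smooth ε hε)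
    (hφ_pde ε hε) (fun η hη hηδ => (hφ_term ε hε η hη).trans (hχ_iso η hηδ))
    (fun x hx => hc_le ε ⟨hε.1, hε.2.le⟩ (x, v) ⟨hv0, hx.1⟩ hv (hx.2.trans haM.le)) ?_
  have hexp : -(c / ε) * (T - t) ≤ -(c * sb / ε) := by
    rw [neg_mul, neg_le_neg_iff, mul_div_right_comm]
    exact mul_le_mul_of_nonneg_left (by linarith [ht.2]) (div_pos hc hε.1).le
  calc (a - c0 * v ^ ((2 : ℝ) / 3)) * exp (-(c / ε) * (T - t)) ≤ M * exp (-(c * sb / ε)) :=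
        mul_le_mul (by linarith [mul_pos c0_pos (rpow_pos_of_pos hv0 ((2 : ℝ) / 3))])
          (exp_le_exp.2 hexp) (exp_pos _).le (by linarith)
    _ ≤ δ₁ := hsmall ε ⟨hε.1, hεε₀⟩

/-- escape of the support of the dual transport solution — if the terminal
datum vanishes within distance δ₁ of the isoperimetric line, then for all small ε the
solution is supported in `{a ≥ M}` for all times `t ∈ [0, T − σ̄]`. -/
theorem dual_transport_support_escape
    (mu sg R₀ R₁ B : ℝ) (hmu : 0 < mu)
    (R T : ℝ) (hR : 1 < R) (hT : 0 < T)
    (r : ℝ × ℝ → ℝ) (hr : IsFusionKernel r R₀ R₁ mu sg B)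
    (δ₁ : ℝ) (hδ₁ : 0 < δ₁)
    (χ : ℝ × ℝ → ℝ)
    (hχ_smooth : ContDiffOn ℝ 1 χ IsoRegion)
    (hχ_bdd : ∃ M : ℝ, ∀ η ∈ IsoRegion, |χ η| + |da χ η| ≤ M)
    (hχ_v : ∀ η : ℝ × ℝ, η.2 ∉ Icc (1 / R) R → χ η = 0)
    (hχ_iso : ∀ η : ℝ × ℝ, η.1 ≤ c0 * η.2 ^ ((2 : ℝ) / 3) + δ₁ → χ η = 0)
    -- φ ε is, for each ε ∈ (0,1), the solution of the dual transport equation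
    (φ : ℝ → ℝ → ℝ × ℝ → ℝ)
    (hφ_smooth : ∀ ε ∈ Ioo (0 : ℝ) 1,
      ContDiffOn ℝ 1 (fun q : ℝ × (ℝ × ℝ) => φ ε q.1 q.2)
        (Icc (0 : ℝ) T ×ˢ IsoRegion))
    (hφ_bdd : ∀ ε ∈ Ioo (0 : ℝ) 1,
      ∃ M : ℝ, ∀ t ∈ Icc (0 : ℝ) T, ∀ η ∈ IsoRegion, |φ ε t η| + |da (φ ε t) η| ≤ M)
    (hφ_v : ∀ ε ∈ Ioo (0 : ℝ) 1, ∀ t ∈ Icc (0 : ℝ) T,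
      ∀ η : ℝ × ℝ, η.2 ∉ Icc (1 / R) R → φ ε t η = 0)
    (hφ_term : ∀ ε ∈ Ioo (0 : ℝ) 1, ∀ η ∈ IsoRegion, φ ε T η = χ η)
    (hφ_pde : ∀ ε ∈ Ioo (0 : ℝ) 1, ∀ t ∈ Icc (0 : ℝ) T, ∀ η ∈ IsoRegion,
      deriv (fun u => φ ε u η) t
        + ε⁻¹ * rbarFn r mu ε η * (c0 * η.2 ^ ((2 : ℝ) / 3) - η.1)
          * da (φ ε t) η = 0) :
    ∀ M > (1 : ℝ), ∀ sb > (0 : ℝ), ∃ ε₀ ∈ Ioo (0 : ℝ) 1,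
      ∀ ε ∈ Ioo (0 : ℝ) 1, ε ≤ ε₀ →
        ∀ t ∈ Icc (0 : ℝ) (T - sb), ∀ η ∈ IsoRegion, η.1 < M → φ ε t η = 0 :=
  dual_transport_support_escape_general mu sg R₀ R₁ B hmu R T hR r hr δ₁ hδ₁ χ hχ_iso φ hφ_smooth
    hφ_v hφ_term hφ_pde
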